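/- With the same hypotheses (∇ψ(q)·f(q) < 0), the matrix D = -[ (f·f)/(∇ψ·f) E + (∇ψ×f)²/((∇ψ·f)(∇ψ·∇ψ)) ] is positive semidefinite. -/

import Mathlib

open Matrix Filter Topology

/-- Matrix-valued cross product: `(x×y)ᵢⱼ = xᵢyⱼ - xⱼyᵢ`. -/
def cross {ι : Type*} (x y : ι → ℝ) : Matrix ι ι ℝ :=
  Matrix.of fun i j => x i * y j - x j * y i

/-!
Write `C = cross g f`, `c = g ⬝ᵥ f < 0` and `b = g ⬝ᵥ g > 0`. The matrix in question is
`(-c b)⁻¹ • ((g ⬝ᵥ g)(f ⬝ᵥ f) • 1 + C²)`, so it suffices that `(g ⬝ᵥ g)(f ⬝ᵥ f) • 1 + C²` is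
positive semidefinite. As `C` is antisymmetric, `zᵀ C² z = -|C z|²`, and `C z = (f ⬝ᵥ z) g - (g ⬝ᵥ z) f`
has `|C z|² ≤ |g|² |f|² |z|²` by Cauchy–Schwarz.
-/

section Cross

variable {ι : Type*}

lemma transpose_cross (x y : ι → ℝ) : (cross x y)ᵀ = -cross x y := by
  ext i j
  simp [cross]

variable [Fintype ι]

lemma dotProduct_self_pos {v : ι → ℝ} (hv : v ≠ 0) : 0 < v ⬝ᵥ v := by
  simpa using dotProduct_self_star_pos_iff.2 hv

lemma dotProduct_sq_le_mul (x y : ι → ℝ) : (x ⬝ᵥ y) ^ 2 ≤ (x ⬝ᵥ x) * (y ⬝ᵥ y) := by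
  simpa only [dotProduct, sq] using Finset.sum_mul_sq_le_sq_mul_sq Finset.univ x y

lemma cross_mulVec (x y z : ι → ℝ) : cross x y *ᵥ z = (y ⬝ᵥ z) • x - (x ⬝ᵥ z) • y := by
  ext i
  simp only [cross, mulVec, dotProduct, of_apply, Pi.sub_apply, Pi.smul_apply, smul_eq_mul,
    sub_mul, Finset.sum_sub_distrib, Finset.sum_mul]
  congr 1 <;> exact Finset.sum_congr rfl fun j _ => by ring

lemma isHermitian_cross_sq [DecidableEq ι] (x y : ι → ℝ) : (cross x y ^ 2).IsHermitian := by
  rw [IsHermitian, conjTranspose_eq_transpose_of_trivial, sq, transpose_mul, transpose_cross,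
    neg_mul_neg]

lemma dotProduct_cross_sq_mulVec [DecidableEq ι] (x y z : ι → ℝ) :
    z ⬝ᵥ (cross x y ^ 2 *ᵥ z) = -((cross x y *ᵥ z) ⬝ᵥ (cross x y *ᵥ z)) := by
  rw [sq, ← mulVec_mulVec, dotProduct_mulVec, ← mulVec_transpose, transpose_cross, neg_mulVec,
    neg_dotProduct]

lemma dotProduct_self_cross_mulVec_le (x y z : ι → ℝ) :
    (cross x y *ᵥ z) ⬝ᵥ (cross x y *ᵥ z) ≤ (x ⬝ᵥ x) * (y ⬝ᵥ y) * (z ⬝ᵥ z) := by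
  rcases eq_or_ne x 0 with rfl | hx
  · simp [cross_mulVec]
  have hb := dotProduct_self_pos hx
  -- Cauchy–Schwarz for `y` against the component of `z` orthogonal to `x`, scaled by `x ⬝ᵥ x`
  have hcs := dotProduct_sq_le_mul y ((x ⬝ᵥ x) • z - (x ⬝ᵥ z) • x)
  have hxz := dotProduct_sq_le_mul x z
  have hxy := dotProduct_sq_le_mul x y
  simp only [cross_mulVec, dotProduct_sub, sub_dotProduct, dotProduct_smul, smul_dotProduct,
    smul_eq_mul, dotProduct_comm y x, dotProduct_comm z x] at hcs ⊢
  nlinarith [mul_nonneg (sub_nonneg.2 hxy) (sq_nonneg (x ⬝ᵥ z))]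

lemma posSemidef_smul_one_add_cross_sq [DecidableEq ι] (x y : ι → ℝ) :
    (((x ⬝ᵥ x) * (y ⬝ᵥ y)) • (1 : Matrix ι ι ℝ) + cross x y ^ 2).PosSemidef := by
  refine .of_dotProduct_mulVec_nonneg
    ((isHermitian_one.smul (IsSelfAdjoint.all _)).add (isHermitian_cross_sq x y)) fun z ↦ ?_
  rw [star_trivial, add_mulVec, smul_mulVec, one_mulVec, dotProduct_add, dotProduct_smul,
    dotProduct_cross_sq_mulVec, smul_eq_mul, ← sub_eq_add_neg, sub_nonneg, mul_comm _ (z ⬝ᵥ z)]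
  simpa only [mul_comm] using dotProduct_self_cross_mulVec_le x y z

end Cross

theorem stmt7_general {n : ℕ} (g f : Fin n → ℝ) (hgf : g ⬝ᵥ f < 0) :
    (-(((f ⬝ᵥ f) / (g ⬝ᵥ f)) • (1 : Matrix (Fin n) (Fin n) ℝ) +
        ((g ⬝ᵥ f) * (g ⬝ᵥ g))⁻¹ • (cross g f) ^ 2)).PosSemidef := by
  have hg : 0 < g ⬝ᵥ g := dotProduct_self_pos (by rintro rfl; simp at hgf)
  have hD : -(((f ⬝ᵥ f) / (g ⬝ᵥ f)) • (1 : Matrix (Fin n) (Fin n) ℝ) +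
        ((g ⬝ᵥ f) * (g ⬝ᵥ g))⁻¹ • (cross g f) ^ 2) =
      (-((g ⬝ᵥ f) * (g ⬝ᵥ g)))⁻¹ • (((g ⬝ᵥ g) * (f ⬝ᵥ f)) • 1 + cross g f ^ 2) := by
    rw [smul_add, smul_smul, neg_add, ← neg_smul, ← neg_smul, inv_neg]
    congr 2
    field_simp
  rw [hD]
  exact (posSemidef_smul_one_add_cross_sq g f).smul
    (inv_nonneg.2 (neg_nonneg.2 (mul_nonpos_of_nonpos_of_nonneg hgf.le hg.le)))

theorem stmt7 {n : ℕ} (g f : Fin n → ℝ) (hg : g ≠ 0) (hf : f ≠ 0) (hgf : g ⬝ᵥ f < 0) :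
    (-(((f ⬝ᵥ f) / (g ⬝ᵥ f)) • (1 : Matrix (Fin n) (Fin n) ℝ) +
        ((g ⬝ᵥ f) * (g ⬝ᵥ g))⁻¹ • (cross g f) ^ 2)).PosSemidef :=
  stmt7_general g f hgf
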